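/- If f : ℤ_p → ℤ_p is 1-Lipschitz, measure-preserving, additive (f(x+y)=f(x)+f(y)) and also AND-multiplicative (f(x AND y) = f(x) AND f(y)) where AND is digit-wise multiplication modulo p, and f is nonzero, then f is the identity map. -/

import Mathlib

/-!
Continuity and additivity make `f` multiplication by `c = f 1`. If `c` were not a unit, `f` would
map `ℤ_[p]` into the open unit ball, which is disjoint from its translate by `1` and so cannot
have full measure; hence `c` is a unit. Since `x AND 1` is the first digit `x₀` of `x`,
AND-multiplicativity against `1` reads `x₀ c = (x c) AND c`. At `x = 1` it makes `c₀` a nonzero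
idempotent mod `p`, so `c₀ = 1`; at `x = p ^ k` the `k`-th digit gives `0 = c₀ c_k = c_k`.
Hence `c = 1`.
-/

open MeasureTheory

variable (p : ℕ) [Fact p.Prime]

noncomputable instance : MeasurableSpace ℤ_[p] := borel _
instance : BorelSpace ℤ_[p] := ⟨rfl⟩

/-- The normalized Haar measure on `ℤ_[p]` (total mass 1). -/
noncomputable def haarZp : Measure ℤ_[p] := Measure.addHaarMeasure ⊤

/-- The k-th digit of the canonical p-adic expansion of `x`. -/
noncomputable def digit (x : ℤ_[p]) (k : ℕ) : ℕ := x.appr (k + 1) / p ^ k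

/-- Digit-wise multiplication modulo `p` on `ℤ_[p]`. -/
noncomputable def pAND (x y : ℤ_[p]) : ℤ_[p] :=
  ∑' k : ℕ, (((digit p x k * digit p y k) % p : ℕ) : ℤ_[p]) * (p : ℤ_[p]) ^ k

lemma sum_range_mul_pow_lt {b : ℕ} (a : ℕ → ℕ) (ha : ∀ k, a k < b) (n : ℕ) :
    ∑ k ∈ Finset.range n, a k * b ^ k < b ^ n := by
  induction n with
  | zero => simp
  | succ n ih =>
    calc ∑ k ∈ Finset.range (n + 1), a k * b ^ k
        < b ^ n + a n * b ^ n := by rw [Finset.sum_range_succ]; omega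
      _ = (a n + 1) * b ^ n := by ring
      _ ≤ b ^ (n + 1) := by rw [pow_succ']; exact Nat.mul_le_mul_right _ (ha n)

open scoped Pointwise in
lemma MeasureTheory.Measure.not_disjoint_vadd_of_measure_eq_one {G : Type*}
    [MeasurableSpace G] [AddGroup G] [MeasurableAdd G] {μ : Measure G} [IsProbabilityMeasure μ]
    [μ.IsAddLeftInvariant]
    {B : Set G} (hB : MeasurableSet B) (hμB : μ B = 1) (a : G) : ¬Disjoint B (a +ᵥ B) := by
  intro hdisj
  have hunion := measure_union (μ := μ) hdisj (hB.const_vadd a)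
  rw [measure_vadd, hμB] at hunion
  have := prob_le_one (μ := μ) (s := B ∪ (a +ᵥ B))
  norm_num [hunion] at this

instance : IsProbabilityMeasure (haarZp p) :=
  ⟨by
    rw [haarZp, ← TopologicalSpace.PositiveCompacts.coe_top]
    exact Measure.addHaarMeasure_self⟩

instance : (haarZp p).IsAddLeftInvariant := by
  unfold haarZp; infer_instance

section

variable {p}

lemma eq_one_of_mul_self_mod_eq_self {d : ℕ} (hd0 : d ≠ 0) (hdp : d < p) (h : d * d % p = d) :
    d = 1 := by
  have hp := (Fact.out : p.Prime)
  have hsq : d * d ≡ d * 1 [MOD p] := by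
    simpa [h] using (Nat.mod_modEq (d * d) p).symm
  have hcop : Nat.gcd p d = 1 :=
    (Nat.Prime.coprime_iff_not_dvd hp).2 (Nat.not_dvd_of_pos_of_lt (Nat.pos_of_ne_zero hd0) hdp)
  have h1 : d ≡ 1 [MOD p] := Nat.ModEq.cancel_left_of_coprime hcop hsq
  rwa [Nat.ModEq, Nat.mod_eq_of_lt hdp, Nat.mod_eq_of_lt hp.one_lt] at h1

lemma PadicInt.appr_eq_of_sub_mem {x : ℤ_[p]} {n r : ℕ} (hr : r < p ^ n)
    (h : x - r ∈ Ideal.span {(p : ℤ_[p]) ^ n}) : x.appr n = r := by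
  have := PadicInt.zmod_congr_of_sub_mem_span n x _ _ (x.appr_spec n) h
  rw [← ZMod.val_cast_of_lt (x.appr_lt n), ← ZMod.val_cast_of_lt hr, this]

lemma PadicInt.eq_of_forall_appr_eq {x y : ℤ_[p]} (h : ∀ n, x.appr n = y.appr n) : x = y := by
  refine PadicInt.ext_of_toZModPow.1 fun n => sub_eq_zero.1 ?_
  rw [← map_sub, ← RingHom.mem_ker, PadicInt.ker_toZModPow]
  simpa [h n] using Ideal.sub_mem _ (x.appr_spec n) (y.appr_spec n)

lemma digit_lt (x : ℤ_[p]) (k : ℕ) : digit p x k < p := by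
  rw [digit, Nat.div_lt_iff_lt_mul (pow_pos (Fact.out : p.Prime).pos k), ← pow_succ']
  exact x.appr_lt (k + 1)

lemma appr_succ_eq_add_digit (x : ℤ_[p]) (k : ℕ) :
    x.appr (k + 1) = x.appr k + digit p x k * p ^ k := by
  obtain ⟨q, hq⟩ := x.dvd_appr_sub_appr k (k + 1) (k.le_add_right 1)
  have hmono := x.appr_mono (k.le_add_right 1)
  have hlt := x.appr_lt k
  have hpk : 0 < p ^ k := pow_pos (Fact.out : p.Prime).pos k
  have hsplit : x.appr (k + 1) = x.appr k + p ^ k * q := by omega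
  rw [digit, hsplit, Nat.add_mul_div_left _ _ hpk, Nat.div_eq_of_lt hlt, zero_add, mul_comm]

lemma appr_eq_sum_digit (x : ℤ_[p]) (n : ℕ) :
    x.appr n = ∑ k ∈ Finset.range n, digit p x k * p ^ k := by
  induction n with
  | zero => rfl
  | succ n ih => rw [appr_succ_eq_add_digit, ih, Finset.sum_range_succ]

lemma eq_of_digit_eq {x y : ℤ_[p]} (h : ∀ k, digit p x k = digit p y k) : x = y :=
  PadicInt.eq_of_forall_appr_eq fun n => by simp only [appr_eq_sum_digit, h]

lemma digit_natCast {n : ℕ} (hn : n < p) (k : ℕ) :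
    digit p n k = if k = 0 then n else 0 := by
  rw [digit,
    PadicInt.appr_eq_of_sub_mem (hn.trans_le (Nat.le_self_pow k.succ_ne_zero p)) (by simp)]
  split_ifs with hk
  · simp [hk]
  · exact Nat.div_eq_of_lt (hn.trans_le (Nat.le_self_pow hk p))

lemma digit_zero (k : ℕ) : digit p 0 k = 0 := by
  simpa using digit_natCast (Fact.out : p.Prime).pos k

lemma digit_one (k : ℕ) : digit p 1 k = if k = 0 then 1 else 0 := by
  exact_mod_cast digit_natCast (Fact.out : p.Prime).one_lt k

lemma digit_at_zero_eq_zero_iff_dvd {x : ℤ_[p]} : digit p x 0 = 0 ↔ (p : ℤ_[p]) ∣ x := by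
  have hspec := x.appr_spec 1
  rw [pow_one, Ideal.mem_span_singleton] at hspec
  simp only [digit, pow_zero, Nat.div_one, zero_add]
  constructor
  · intro h
    simpa [h] using hspec
  · intro h
    exact PadicInt.appr_eq_of_sub_mem (pow_pos (Fact.out : p.Prime).pos 1)
      (by simpa [Ideal.mem_span_singleton] using h)

lemma digit_pow_mul (x : ℤ_[p]) (j k : ℕ) :
    digit p ((p : ℤ_[p]) ^ k * x) (j + k) = digit p x j := by
  have hshift : ((p : ℤ_[p]) ^ k * x).appr (j + 1 + k) = p ^ k * x.appr (j + 1) := by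
    refine PadicInt.appr_eq_of_sub_mem ?_ ?_
    · rw [pow_add, mul_comm (p ^ (j + 1))]
      exact Nat.mul_lt_mul_of_pos_left (x.appr_lt _) (pow_pos (Fact.out : p.Prime).pos k)
    · obtain ⟨t, ht⟩ := Ideal.mem_span_singleton.1 (x.appr_spec (j + 1))
      refine Ideal.mem_span_singleton.2 ⟨t, ?_⟩
      push_cast
      rw [← mul_sub, ht]
      ring
  rw [digit, show j + k + 1 = j + 1 + k by ring, hshift, pow_add, mul_comm (p ^ j),
    Nat.mul_div_mul_left _ _ (pow_pos (Fact.out : p.Prime).pos k), digit]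

lemma summable_natCast_mul_pow (a : ℕ → ℕ) :
    Summable fun k => (a k : ℤ_[p]) * (p : ℤ_[p]) ^ k := by
  have hp : ‖(p : ℤ_[p])‖ < 1 := (PadicInt.norm_lt_one_iff_dvd _).2 dvd_rfl
  refine Summable.of_norm_bounded (g := fun k => ‖(p : ℤ_[p])‖ ^ k)
    (summable_geometric_of_lt_one (norm_nonneg _) hp) fun k => ?_
  rw [norm_mul, norm_pow]
  exact mul_le_of_le_one_left (by positivity) (PadicInt.norm_le_one _)

lemma appr_tsum_natCast_mul_pow {a : ℕ → ℕ} (ha : ∀ k, a k < p) (n : ℕ) :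
    (∑' k, (a k : ℤ_[p]) * (p : ℤ_[p]) ^ k).appr n =
      ∑ k ∈ Finset.range n, a k * p ^ k := by
  refine PadicInt.appr_eq_of_sub_mem (sum_range_mul_pow_lt a ha n) ?_
  rw [← (summable_natCast_mul_pow a).sum_add_tsum_nat_add n, Ideal.mem_span_singleton]
  refine ⟨∑' k, (a (k + n) : ℤ_[p]) * (p : ℤ_[p]) ^ k, ?_⟩
  rw [← (summable_natCast_mul_pow _).tsum_mul_left]
  push_cast
  simp only [add_sub_cancel_left, pow_add]
  congr 1 with k
  ring

lemma digit_tsum_natCast_mul_pow {a : ℕ → ℕ} (ha : ∀ k, a k < p) (j : ℕ) :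
    digit p (∑' k, (a k : ℤ_[p]) * (p : ℤ_[p]) ^ k) j = a j := by
  rw [digit, appr_tsum_natCast_mul_pow ha, Finset.sum_range_succ,
    Nat.add_mul_div_right _ _ (pow_pos (Fact.out : p.Prime).pos j),
    Nat.div_eq_of_lt (sum_range_mul_pow_lt a ha j), zero_add]

lemma digit_pAND (x y : ℤ_[p]) (k : ℕ) :
    digit p (pAND p x y) k = digit p x k * digit p y k % p :=
  digit_tsum_natCast_mul_pow (fun _ => Nat.mod_lt _ (Fact.out : p.Prime).pos) k

lemma pAND_one (x : ℤ_[p]) : pAND p x 1 = digit p x 0 := by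
  rw [pAND, tsum_eq_single 0 fun k hk => by simp [digit_one, hk]]
  simp [digit_one, Nat.mod_eq_of_lt (digit_lt x 0)]

open scoped Pointwise in
lemma PadicInt.norm_eq_one_of_measurePreserving_mul_right {c : ℤ_[p]}
    (h : MeasurePreserving (· * c) (haarZp p) (haarZp p)) : ‖c‖ = 1 := by
  by_contra hc
  have hc : ‖c‖ < 1 := (PadicInt.norm_le_one c).lt_of_ne hc
  have hB := (Metric.isOpen_ball (x := (0 : ℤ_[p])) (ε := 1)).measurableSet
  have hpre : (· * c) ⁻¹' Metric.ball 0 1 = Set.univ :=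
    Set.eq_univ_of_forall fun x => by
      simpa [norm_mul] using (mul_le_of_le_one_left (norm_nonneg c) (x.norm_le_one)).trans_lt hc
  have hμB : haarZp p (Metric.ball 0 1) = 1 := by
    rw [← h.measure_preimage hB.nullMeasurableSet, hpre, measure_univ]
  refine Measure.not_disjoint_vadd_of_measure_eq_one hB hμB 1
    (Set.disjoint_left.2 fun y hy hy' => ?_)
  rw [Set.mem_vadd_set_iff_neg_vadd_mem, mem_ball_zero_iff, vadd_eq_add] at hy'
  rw [mem_ball_zero_iff] at hy
  have := PadicInt.nonarchimedean y (-(-1 + y))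
  rw [show y + -(-1 + y) = 1 by ring, norm_one, norm_neg] at this
  exact (this.trans_lt (max_lt hy hy')).false

lemma PadicInt.apply_eq_mul_apply_one {f : ℤ_[p] → ℤ_[p]} (hf : Continuous f)
    (hadd : ∀ x y, f (x + y) = f x + f y) (x : ℤ_[p]) : f x = x * f 1 := by
  let g := AddMonoidHom.mk' f hadd
  have hnat (n : ℕ) : f n = n * f 1 := by simpa [g, nsmul_eq_mul] using map_nsmul g n 1
  exact congrFun (PadicInt.denseRange_natCast.equalizer hf (continuous_id.mul continuous_const)
    (funext hnat)) x

end

theorem stmt_14 (f : ℤ_[p] → ℤ_[p])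
    (hlip : ∀ x y : ℤ_[p], ‖f x - f y‖ ≤ ‖x - y‖)
    (hmp : MeasurePreserving f (haarZp p) (haarZp p))
    (hadd : ∀ x y : ℤ_[p], f (x + y) = f x + f y)
    (hand : ∀ x y : ℤ_[p], f (pAND p x y) = pAND p (f x) (f y)) :
    ∀ x : ℤ_[p], f x = x := by
  have hcont : Continuous f :=
    (LipschitzWith.of_dist_le_mul (K := 1) fun x y => by
      simpa [dist_eq_norm] using hlip x y).continuous
  set c := f 1
  have hf : f = (· * c) := funext (PadicInt.apply_eq_mul_apply_one hcont hadd)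
  have hAND (x : ℤ_[p]) : (digit p x 0 : ℤ_[p]) * c = pAND p (x * c) c := by
    simpa [hf, pAND_one] using hand x 1
  have hc0_ne : digit p c 0 ≠ 0 := by
    rw [Ne, digit_at_zero_eq_zero_iff_dvd, ← PadicInt.norm_lt_one_iff_dvd,
      PadicInt.norm_eq_one_of_measurePreserving_mul_right (hf ▸ hmp)]
    exact lt_irrefl 1
  have hc0 : digit p c 0 = 1 := by
    have h := congrArg (digit p · 0) (hAND 1)
    simp only [digit_one, ↓reduceIte, Nat.cast_one, one_mul, digit_pAND] at h
    exact eq_one_of_mul_self_mod_eq_self hc0_ne (digit_lt c 0) h.symm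
  have hck (k : ℕ) (hk : k ≠ 0) : digit p c k = 0 := by
    -- `p ^ k` has first digit `0`, and the `k`-th digit of `p ^ k * c` is `c₀ = 1`
    have h := congrArg (digit p · k) (hAND (p ^ k))
    simp only [digit_at_zero_eq_zero_iff_dvd.2 (dvd_pow_self _ hk), Nat.cast_zero, zero_mul,
      digit_zero, digit_pAND] at h
    have hshift : digit p ((p : ℤ_[p]) ^ k * c) k = digit p c 0 := by
      simpa using digit_pow_mul c 0 k
    rwa [hshift, hc0, one_mul, Nat.mod_eq_of_lt (digit_lt c k), eq_comm] at h
  have hc1 : c = 1 := eq_of_digit_eq fun k => by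
    rw [digit_one]
    split_ifs with hk
    · rw [hk, hc0]
    · exact hck k hk
  intro x
  rw [hf, hc1]
  exact mul_one x
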